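/- arXiv:2511.11254 — 3 statements merged into one kernel-verified Lean document; each statement's English description precedes it below -/
import Mathlib

section
/- Let G be a finite abelian group, F a group, (F, G, ◁, ▷) a matched pair, σ cocycle data and τ trivial (τ(g, g'; f) = 1 for all g, g' ∈ G, f ∈ F). Suppose the Hopf algebra H = k^G τ#_σ kF admits a coquasitriangular structure. If f, f' ∈ F and g ∈ G_f ∩ G_{f'}, then there exists f'' ∈ O_f with g ◁ f'' ∈ G_{f'} if and only if there exists f''' ∈ O_{f'} with g ◁ f''' ∈ G_f, where G_f = {x ∈ G : x ▷ f = f} and O_f = {x ▷ f : x ∈ G}. -/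
/-- A matched pair of groups `(F, G, ◁, ▷)`: `rtr g f = g ▷ f` is an action of the
group `G` on the set `F`, and `ltl g f = g ◁ f` is an action of the group `F` on the
set `G`, satisfying the matched pair compatibility conditions. -/
structure MatchedPair (F G : Type*) [Group F] [Group G] where
  rtr : G → F → F
  ltl : G → F → G
  one_rtr : ∀ f, rtr 1 f = f
  mul_rtr : ∀ g g' f, rtr (g * g') f = rtr g (rtr g' f)
  ltl_one : ∀ g, ltl g 1 = g
  ltl_mul : ∀ g f f', ltl g (f * f') = ltl (ltl g f) f'
  rtr_mul : ∀ g f f', rtr g (f * f') = rtr g f * rtr (ltl g f) f'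
  mul_ltl : ∀ g g' f, ltl (g * g') f = ltl g (rtr g' f) * ltl g' f

/-- Cocycle data `(σ, τ)` for the abelian extension `k^G τ#_σ kF`. -/
structure CocycleData (k F G : Type*) [Field k] [Group F] [Group G]
    (mp : MatchedPair F G) where
  sig : G → F → F → kˣ
  tau : G → G → F → kˣ
  sig_one_left : ∀ g f, sig g 1 f = 1
  sig_one_right : ∀ g f, sig g f 1 = 1
  one_sig : ∀ f f', sig 1 f f' = 1
  sig_cocycle : ∀ g f f' f'',
    sig (mp.ltl g f) f' f'' * sig g f (f' * f'') = sig g f f' * sig g (f * f') f''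
  one_tau : ∀ g f, tau 1 g f = 1
  tau_one : ∀ g f, tau g 1 f = 1
  tau_one_right : ∀ g g', tau g g' 1 = 1
  tau_cocycle : ∀ g g' g'' f,
    tau g g' (mp.rtr g'' f) * tau (g * g') g'' f = tau g (g' * g'') f * tau g' g'' f
  compat : ∀ g g' f f',
    sig (g * g') f f' * tau g g' (f * f')
      = sig g (mp.rtr g' f) (mp.rtr (mp.ltl g' f) f') * sig g' f f' * tau g g' f
        * tau (mp.ltl g (mp.rtr g' f)) (mp.ltl g' f) f'

/-- The product `(p_g # f)(p_{g'} # f') = δ_{g ◁ f, g'} σ(g; f, f') p_g # (f f')` of two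
basis elements of `H = k^G τ#_σ kF`, as an element of `H` (realized as `(G × F) →₀ k`). -/
noncomputable def mulB {k F G : Type*} [Field k] [Group F] [Group G] [DecidableEq G]
    (mp : MatchedPair F G) (cd : CocycleData k F G mp) (i j : G × F) : (G × F) →₀ k :=
  if mp.ltl i.1 i.2 = j.1 then
    Finsupp.single (i.1, i.2 * j.2) ((cd.sig i.1 i.2 j.2 : kˣ) : k)
  else 0

/-- `R` (given by its values `R g f h f' = R(p_g # f, p_h # f')` on the basis
`{p_g # f}` of `H = k^G τ#_σ kF`) is a coquasitriangular structure on `H`: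
it is convolution invertible, satisfies `R(a, bc) = Σ R(a₁, c) R(a₂, b)` and
`R(ab, c) = Σ R(a, c₁) R(b, c₂)`, and the quasi-commutativity axiom
`Σ R(a₁, b₁) a₂ b₂ = Σ b₁ a₁ R(a₂, b₂)`, all expressed on basis elements using
`Δ(p_g # f) = Σ_x τ(g x⁻¹, x; f) (p_{g x⁻¹} # (x ▷ f)) ⊗ (p_x # f)` and
`ε(p_g # f) = δ_{g,1}`. -/
structure IsCQT {k F G : Type*} [Field k] [Group F] [Group G] [Fintype G] [DecidableEq G]
    (mp : MatchedPair F G) (cd : CocycleData k F G mp)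
    (R : G → F → G → F → k) : Prop where
  conv_inv : ∃ R' : G → F → G → F → k,
    (∀ (g h : G) (f f' : F),
      ∑ x : G, ∑ y : G,
        ((cd.tau (g * x⁻¹) x f : kˣ) : k) * ((cd.tau (h * y⁻¹) y f' : kˣ) : k) *
          R (g * x⁻¹) (mp.rtr x f) (h * y⁻¹) (mp.rtr y f') * R' x f y f'
        = (if g = 1 then (1 : k) else 0) * (if h = 1 then (1 : k) else 0)) ∧
    (∀ (g h : G) (f f' : F),
      ∑ x : G, ∑ y : G,
        ((cd.tau (g * x⁻¹) x f : kˣ) : k) * ((cd.tau (h * y⁻¹) y f' : kˣ) : k) *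
          R' (g * x⁻¹) (mp.rtr x f) (h * y⁻¹) (mp.rtr y f') * R x f y f'
        = (if g = 1 then (1 : k) else 0) * (if h = 1 then (1 : k) else 0))
  cqt1 : ∀ (g h l : G) (f f' f'' : F),
    (if mp.ltl h f' = l then (1 : k) else 0) * ((cd.sig h f' f'' : kˣ) : k)
        * R g f h (f' * f'')
      = ∑ x : G, ((cd.tau (g * x⁻¹) x f : kˣ) : k)
          * R (g * x⁻¹) (mp.rtr x f) l f'' * R x f h f'
  cqt2 : ∀ (g h l : G) (f f' f'' : F),
    (if mp.ltl g f = h then (1 : k) else 0) * ((cd.sig g f f' : kˣ) : k)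
        * R g (f * f') l f''
      = ∑ x : G, ((cd.tau (l * x⁻¹) x f'' : kˣ) : k)
          * R g f (l * x⁻¹) (mp.rtr x f'') * R h f' x f''
  qcomm : ∀ (g h : G) (f f' : F),
    (∑ x : G, ∑ y : G,
      (((cd.tau (g * x⁻¹) x f : kˣ) : k) * ((cd.tau (h * y⁻¹) y f' : kˣ) : k) *
        R (g * x⁻¹) (mp.rtr x f) (h * y⁻¹) (mp.rtr y f')) • mulB mp cd (x, f) (y, f'))
      = ∑ x : G, ∑ y : G,
        (((cd.tau (g * x⁻¹) x f : kˣ) : k) * ((cd.tau (h * y⁻¹) y f' : kˣ) : k) *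
          R x f y f') • mulB mp cd (h * y⁻¹, mp.rtr y f') (g * x⁻¹, mp.rtr x f)

/-!
A coquasitriangular structure `R` forces `g ◁ c = g` whenever `g ▷ c = c`; with this, both sides
of the equivalence hold, witnessed by `f''' = f'` and `f'' = f`.

To see it, pair `R` in its second argument with `ψ # 1 = ∑_l ψ(l) p_l # 1` for a character `ψ` of
`G`. Quasi-commutativity against `p_h # 1` shows that `R(p_v # c, p_l # 1)` vanishes unless
`v ▷ c = c`, and that for such `v` moving `c` to `g ▷ c` multiplies `R(p_v # c, ψ # 1)` by
`ψ(g) ψ(g ◁ c)⁻¹`. Convolution invertibility and `R(ab, c) = R(a, c₁) R(b, c₂)` give some `v` with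
`R(p_v # c, ψ # 1) ≠ 0`, so `ψ(g ◁ c) = ψ(g)` for every `ψ`, and characters separate the points
of `G`.
-/

namespace MatchedPair

variable {F G : Type*} [Group F] [Group G] (mp : MatchedPair F G)

lemma rtr_one (g : G) : mp.rtr g 1 = 1 := by
  have h := mp.rtr_mul g 1 1
  rw [mul_one, mp.ltl_one] at h
  exact left_eq_mul.mp h

end MatchedPair

/-- `R(p_v # a, ψ # 1)`, where `ψ # 1 = ∑_l ψ(l) p_l # 1` for a character `ψ` of `G`. -/
noncomputable def charPairing {k F G : Type*} [Field k] [One F] [Group G] [Fintype G]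
    (R : G → F → G → F → k) (ψ : G →* kˣ) (v : G) (a : F) : k :=
  ∑ l : G, (ψ l : k) * R v a l 1

namespace IsCQT

variable {k F G : Type*} [Field k] [Group F] [Fintype G] [DecidableEq G]

section Group

variable [Group G] {mp : MatchedPair F G} {cd : CocycleData k F G mp} {R : G → F → G → F → k}

lemma exists_charPairing_one_ne_zero (htau : ∀ (g g' : G) (f : F), cd.tau g g' f = 1)
    (hR : IsCQT mp cd R) (ψ : G →* kˣ) : ∃ v : G, charPairing R ψ v 1 ≠ 0 := by
  obtain ⟨R', hinv, -⟩ := hR.conv_inv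
  have hinv_one (h : G) :
      ∑ x : G, ∑ y : G, R x⁻¹ 1 (h * y⁻¹) 1 * R' x 1 y 1 = if h = 1 then 1 else 0 := by
    simpa [htau, mp.rtr_one] using hinv 1 h 1 1
  have hcounit : ∑ x : G, ∑ y : G, (ψ y : k) * charPairing R ψ x⁻¹ 1 * R' x 1 y 1 = 1 :=
    calc ∑ x : G, ∑ y : G, (ψ y : k) * charPairing R ψ x⁻¹ 1 * R' x 1 y 1
        = ∑ x : G, ∑ y : G, ∑ h : G, (ψ h : k) * (R x⁻¹ 1 (h * y⁻¹) 1 * R' x 1 y 1) := by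
          refine Finset.sum_congr rfl fun x _ => Finset.sum_congr rfl fun y _ => ?_
          rw [charPairing, Finset.mul_sum, Finset.sum_mul]
          refine Fintype.sum_equiv (Equiv.mulRight y) _ _ fun m => ?_
          simp only [Equiv.coe_mulRight, mul_inv_cancel_right, map_mul, Units.val_mul]
          ring
      _ = ∑ h : G, (ψ h : k) * ∑ x : G, ∑ y : G, R x⁻¹ 1 (h * y⁻¹) 1 * R' x 1 y 1 := by
          simp only [Finset.mul_sum]
          exact (Finset.sum_comm.trans (Finset.sum_congr rfl fun x _ => Finset.sum_comm)).symm
      _ = 1 := by simp [hinv_one]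
  by_contra! hall
  simp [hall] at hcounit

lemma charPairing_mul_charPairing (htau : ∀ (g g' : G) (f : F), cd.tau g g' f = 1)
    (hR : IsCQT mp cd R) (ψ : G →* kˣ) (v : G) (c : F) :
    charPairing R ψ v c * charPairing R ψ (mp.ltl v c) c⁻¹
      = cd.sig v c c⁻¹ * charPairing R ψ v 1 := by
  have hcqt2 (l : G) : (cd.sig v c c⁻¹ : k) * R v 1 l 1
      = ∑ x : G, R v c (l * x⁻¹) 1 * R (mp.ltl v c) c⁻¹ x 1 := by
    simpa [htau, mp.rtr_one] using hR.cqt2 v (mp.ltl v c) l c c⁻¹ 1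
  calc charPairing R ψ v c * charPairing R ψ (mp.ltl v c) c⁻¹
      = ∑ x : G, ∑ m : G, ((ψ m : k) * R v c m 1) * ((ψ x : k) * R (mp.ltl v c) c⁻¹ x 1) := by
        rw [charPairing, charPairing, Finset.sum_mul_sum]
        exact Finset.sum_comm
    _ = ∑ x : G, ∑ l : G, (ψ l : k) * (R v c (l * x⁻¹) 1 * R (mp.ltl v c) c⁻¹ x 1) := by
        refine Finset.sum_congr rfl fun x _ => ?_
        refine Fintype.sum_equiv (Equiv.mulRight x) _ _ fun m => ?_
        simp only [Equiv.coe_mulRight, mul_inv_cancel_right, map_mul, Units.val_mul]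
        ring
    _ = ∑ l : G, (ψ l : k) * ((cd.sig v c c⁻¹ : k) * R v 1 l 1) := by
        rw [Finset.sum_comm]
        simp only [← Finset.mul_sum, hcqt2]
    _ = cd.sig v c c⁻¹ * charPairing R ψ v 1 := by
        rw [charPairing, Finset.mul_sum]
        exact Finset.sum_congr rfl fun l _ => by ring

end Group

section CommGroup

variable [CommGroup G] {mp : MatchedPair F G} {cd : CocycleData k F G mp}
  {R : G → F → G → F → k}

open Classical in
/-- The `(p_z # w)`-coefficient of quasi-commutativity for `p_{bz} # c` and `p_{yz} # 1`. -/
lemma qcomm_one_apply (htau : ∀ (g g' : G) (f : F), cd.tau g g' f = 1) (hR : IsCQT mp cd R)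
    (b y z : G) (c w : F) :
    (if c = w then R b (mp.rtr z c) (y * z * (mp.ltl z c)⁻¹) 1 else 0)
      = if mp.rtr b c = w then R b c y 1 else 0 := by
  have h := DFunLike.congr_fun (hR.qcomm (b * z) (y * z) c 1) (z, w)
  simp only [mulB, htau, Units.val_one, one_mul, mul_one, mp.rtr_one, mp.ltl_one,
    cd.sig_one_right, cd.sig_one_left, Finset.sum_apply', Finsupp.smul_apply, smul_eq_mul,
    apply_ite (fun φ : (G × F) →₀ k => φ (z, w)), Finsupp.single_apply, Finsupp.coe_zero,
    Pi.zero_apply, Prod.mk.injEq, mul_ite, mul_zero, ← ite_and] at h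
  have hleft : ∀ x x' : G,
      (mp.ltl x c = x' ∧ x = z ∧ c = w) ↔ (x' = mp.ltl z c ∧ x = z ∧ c = w) :=
    fun x x' => ⟨fun ⟨h1, h2, h3⟩ => ⟨h2 ▸ h1.symm, h2, h3⟩,
      fun ⟨h1, h2, h3⟩ => ⟨h2 ▸ h1.symm, h2, h3⟩⟩
  have hright : ∀ x x' : G,
      (y * z * x'⁻¹ = b * z * x⁻¹ ∧ y * z * x'⁻¹ = z ∧ mp.rtr x c = w) ↔
        (x' = y ∧ x = b ∧ mp.rtr b c = w) := by
    intro x x'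
    constructor
    · rintro ⟨h1, h2, h3⟩
      have hx' : x' = y := by
        rw [mul_inv_eq_iff_eq_mul, mul_comm z x'] at h2
        exact (mul_right_cancel h2).symm
      rw [h2, eq_comm, mul_inv_eq_iff_eq_mul, mul_comm z x] at h1
      have hx : x = b := (mul_right_cancel h1).symm
      exact ⟨hx', hx, hx ▸ h3⟩
    · rintro ⟨rfl, rfl, h3⟩
      exact ⟨by rw [mul_inv_cancel_comm, mul_inv_cancel_comm], mul_inv_cancel_comm .., h3⟩
  simpa only [hleft, hright, ite_and, Finset.sum_ite_eq', Finset.mem_univ, if_true,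
    mul_inv_cancel_right] using h

lemma eq_zero_of_rtr_ne (htau : ∀ (g g' : G) (f : F), cd.tau g g' f = 1) (hR : IsCQT mp cd R)
    {b : G} {c : F} (hbc : mp.rtr b c ≠ c) (y : G) : R b c y 1 = 0 := by
  simpa [hbc.symm] using (hR.qcomm_one_apply htau b y 1 c (mp.rtr b c)).symm

lemma rtr_apply_of_rtr_eq (htau : ∀ (g g' : G) (f : F), cd.tau g g' f = 1) (hR : IsCQT mp cd R)
    {b : G} {c : F} (hbc : mp.rtr b c = c) (y z : G) :
    R b (mp.rtr z c) (y * z * (mp.ltl z c)⁻¹) 1 = R b c y 1 := by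
  simpa [hbc] using hR.qcomm_one_apply htau b y z c c

lemma charPairing_eq_zero_of_rtr_ne (htau : ∀ (g g' : G) (f : F), cd.tau g g' f = 1)
    (hR : IsCQT mp cd R) (ψ : G →* kˣ) {v : G} {c : F} (hvc : mp.rtr v c ≠ c) :
    charPairing R ψ v c = 0 :=
  Finset.sum_eq_zero fun l _ => by rw [hR.eq_zero_of_rtr_ne htau hvc, mul_zero]

lemma charPairing_rtr_of_rtr_eq (htau : ∀ (g g' : G) (f : F), cd.tau g g' f = 1)
    (hR : IsCQT mp cd R) (ψ : G →* kˣ) {v : G} {c : F} (hvc : mp.rtr v c = c) (g : G) :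
    charPairing R ψ v (mp.rtr g c) * ψ (mp.ltl g c) = ψ g * charPairing R ψ v c := by
  rw [charPairing, charPairing, Finset.sum_mul, Finset.mul_sum]
  refine (Fintype.sum_equiv (Equiv.mulRight (g * (mp.ltl g c)⁻¹)) _ _ fun y => ?_).symm
  simp only [Equiv.coe_mulRight, ← mul_assoc, hR.rtr_apply_of_rtr_eq htau hvc]
  simp only [map_mul, map_inv, Units.val_mul, Units.val_inv_eq_inv_val]
  field_simp

theorem ltl_eq_self_of_rtr_eq [HasEnoughRootsOfUnity k (Monoid.exponent G)]
    (htau : ∀ (g g' : G) (f : F), cd.tau g g' f = 1) (hR : IsCQT mp cd R)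
    {g : G} {c : F} (hgc : mp.rtr g c = c) : mp.ltl g c = g := by
  refine (CommGroup.forall_apply_eq_apply_iff G (M := k)).mp fun ψ => ?_
  obtain ⟨v, hv⟩ := hR.exists_charPairing_one_ne_zero htau ψ
  have hvc : charPairing R ψ v c ≠ 0 := fun h => hv <| by
    simpa [h] using (hR.charPairing_mul_charPairing htau ψ v c).symm
  have hv_fix : mp.rtr v c = c := by
    by_contra hne
    exact hvc (hR.charPairing_eq_zero_of_rtr_ne htau ψ hne)
  have hψ := hR.charPairing_rtr_of_rtr_eq htau ψ hv_fix g
  rw [hgc, mul_comm] at hψ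
  exact Units.val_injective (mul_right_cancel₀ hvc hψ)

end CommGroup

end IsCQT

/-- (Proposition on actions, part 2.) Let `G` be a finite abelian group, `τ` trivial, and
suppose `H = k^G τ#_σ kF` admits a coquasitriangular structure. If `g ∈ G_f ∩ G_{f'}`,
then there exists `f'' ∈ O_f` with `g ◁ f'' ∈ G_{f'}` if and only if there exists
`f''' ∈ O_{f'}` with `g ◁ f''' ∈ G_f`. -/
theorem exists_ltl_mem_stabilizer_iff_of_cqt {k F G : Type*} [Field k] [IsAlgClosed k]
    [CharZero k] [Group F] [CommGroup G] [Fintype G] [DecidableEq G]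
    (mp : MatchedPair F G) (cd : CocycleData k F G mp)
    (htau : ∀ (g g' : G) (f : F), cd.tau g g' f = 1)
    (hR : ∃ R : G → F → G → F → k, IsCQT mp cd R)
    (f f' : F) (g : G)
    (hgf : mp.rtr g f = f) (hgf' : mp.rtr g f' = f') :
    (∃ f'' ∈ Set.range (fun x : G => mp.rtr x f), mp.rtr (mp.ltl g f'') f' = f')
      ↔ (∃ f''' ∈ Set.range (fun x : G => mp.rtr x f'), mp.rtr (mp.ltl g f''') f = f) := by
  obtain ⟨R, hR⟩ := hR
  have : NeZero (Monoid.exponent G : k) :=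
    ⟨Nat.cast_ne_zero.mpr Monoid.exponent_ne_zero_of_finite⟩
  have hf : mp.ltl g f = g := hR.ltl_eq_self_of_rtr_eq htau hgf
  have hf' : mp.ltl g f' = g := hR.ltl_eq_self_of_rtr_eq htau hgf'
  exact iff_of_true ⟨f, ⟨1, mp.one_rtr f⟩, by rwa [hf]⟩ ⟨f', ⟨1, mp.one_rtr f'⟩, by rwa [hf']⟩
end

section
/- Let G be a finite group, F a group, (F, G, ◁, ▷) a matched pair, σ, τ cocycle data, and suppose the Hopf algebra H = k^G τ#_σ kF admits a coquasitriangular structure. Fix f ∈ F. Let V with basis {v^(1), …, v^(m)} be a simple right comodule over the coalgebra k^{G_f}_{τ_f}, with coaction ρ(v^(i)) = Σ_{l=1}^m v^(l) ⊗ (Σ_{g∈G_f} a^g_{li} p_g), and let W with basis {w^(1), …, w^(n)} be a simple right comodule over the coalgebra k^G, with coaction ρ(w^(j)) = Σ_{k=1}^n w^(k) ⊗ (Σ_{h∈G} b^h_{kj} p_h), where a^g_{li}, b^h_{kj} ∈ k. Then for every g ∈ G_f and z ∈ T_f: Σ_{i=1}^m Σ_{j=1}^n a^g_{ii} b^{(z⁻¹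 g z) ◁ (z⁻¹ ▷ f)}_{jj} = Σ_{i=1}^m Σ_{j=1}^n a^g_{ii} b^{z⁻¹ g z}_{jj}. -/
section MatchedPairStabilizer

variable {F G : Type*} [Group F] [Group G]

theorem MatchedPair.rtr_one_s6 (mp : MatchedPair F G) (g : G) : mp.rtr g 1 = 1 := by
  have h := mp.rtr_mul g 1 1
  rwa [mp.ltl_one, one_mul, left_eq_mul] at h

def MatchedPair.stabilizer (mp : MatchedPair F G) (f : F) : Subgroup G where
  carrier := {g | mp.rtr g f = f}
  mul_mem' {u w} hu hw := by
    simp only [Set.mem_ofPred_eq] at hu hw ⊢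
    rw [mp.mul_rtr, hw, hu]
  one_mem' := mp.one_rtr f
  inv_mem' {u} hu := by
    simp only [Set.mem_ofPred_eq] at hu ⊢
    conv_lhs => rw [← hu, ← mp.mul_rtr, inv_mul_cancel, mp.one_rtr]

@[simp]
theorem MatchedPair.mem_stabilizer {mp : MatchedPair F G} {f : F} {g : G} :
    g ∈ mp.stabilizer f ↔ mp.rtr g f = f :=
  Iff.rfl

instance MatchedPair.decidableMemStabilizer [DecidableEq F] (mp : MatchedPair F G) (f : F) :
    DecidablePred (· ∈ mp.stabilizer f) :=
  fun g => decidable_of_iff (mp.rtr g f = f) Iff.rfl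

theorem MatchedPair.mul_inv_mem_stabilizer_of_rtr_inv_eq {mp : MatchedPair F G} {f : F}
    {s z : G} (h : mp.rtr s⁻¹ f = mp.rtr z⁻¹ f) : z * s⁻¹ ∈ mp.stabilizer f := by
  rw [MatchedPair.mem_stabilizer, mp.mul_rtr, h, ← mp.mul_rtr, mul_inv_cancel, mp.one_rtr]

end MatchedPairStabilizer

theorem eq_of_mul_inv_mem_of_existsUnique {G : Type*} [Group G] {H : Subgroup G} {T : Set G}
    (hT : ∀ x : G, ∃! z, z ∈ T ∧ x * z⁻¹ ∈ H) {s t : G} (hs : s ∈ T) (ht : t ∈ T)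
    (h : s * t⁻¹ ∈ H) : s = t :=
  ((hT t).unique ⟨ht, by simp [H.one_mem]⟩ ⟨hs, by simpa using H.inv_mem h⟩).symm

theorem Matrix.trace_eq_of_mul_eq_mul {n R : Type*} [Fintype n] [DecidableEq n] [CommSemiring R]
    {B B' M N : Matrix n n R} (hB : B' * B = 1) (h : B * M = N * B) : M.trace = N.trace :=
  calc M.trace = (B' * (B * M)).trace := by rw [← Matrix.mul_assoc, hB, Matrix.one_mul]
    _ = (N * B * B').trace := by rw [h, Matrix.trace_mul_comm]
    _ = N.trace := by rw [Matrix.mul_assoc, mul_eq_one_comm.mp hB, Matrix.mul_one]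

def tensorCoeff {k G J P : Type*} [Mul k] (c : J → J → G → k) (d : P → P → G → k) :
    J × P → J × P → G × G → k :=
  fun lp qr gh => c lp.1 qr.1 gh.1 * d lp.2 qr.2 gh.2

section MultiplicativeMatrix

variable {k G X J : Type*} [CommSemiring k] [Group G] [Fintype J] [DecidableEq J]

/-- `c` and `φ` encode the matrix with entries `C l i = Σ_g c l i g · p_g # φ i` over the
coalgebra with basis `p_g # f`, `Δ(p_g # f) = Σ_x τ(g x⁻¹, x; f) p_{g x⁻¹} # (x ▷ f) ⊗ p_x # f`
and `ε(p_g # f) = δ_{g,1}`; the conditions make it multiplicative: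
`Δ C l i = Σ_q C l q ⊗ C q i` and `ε C l i = δ_{l,i}`. -/
structure IsMultiplicativeMatrix (act : G → X → X) (τ : G → G → X → k)
    (c : J → J → G → k) (φ : J → X) : Prop where
  sum_mul : ∀ l i g x, ∑ q, c l q g * c q i x = τ g x (φ i) * c l i (g * x)
  eq_act_of_ne_zero : ∀ q i x, c q i x ≠ 0 → φ q = act x (φ i)
  apply_one : ∀ l i, c l i 1 = if l = i then 1 else 0

variable {act : G → X → X} {τ : G → G → X → k} {c : J → J → G → k} {φ : J → X}

/-- `Σ_q C l q ⊗ C q i = Δ (C l i)`, tested against an arbitrary `Φ`. -/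
theorem IsMultiplicativeMatrix.sum_smul_comul [Fintype G] {V : Type*} [AddCommMonoid V]
    [Module k V] (hc : IsMultiplicativeMatrix act τ c φ) (l i : J) (Φ : G → X → G → V) :
    ∑ q, ∑ g, ∑ x, (c l q g * c q i x) • Φ g (φ q) x
      = ∑ g, ∑ x, (τ (g * x⁻¹) x (φ i) * c l i g) • Φ (g * x⁻¹) (act x (φ i)) x := by
  have hterm : ∀ q g x, (c l q g * c q i x) • Φ g (φ q) x
      = (c l q g * c q i x) • Φ g (act x (φ i)) x := by
    intro q g x
    by_cases h : c q i x = 0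
    · simp [h]
    · rw [hc.eq_act_of_ne_zero q i x h]
  calc ∑ q, ∑ g, ∑ x, (c l q g * c q i x) • Φ g (φ q) x
      = ∑ g, ∑ x, (τ g x (φ i) * c l i (g * x)) • Φ g (act x (φ i)) x := by
        rw [Finset.sum_comm]
        refine Finset.sum_congr rfl fun g _ => ?_
        rw [Finset.sum_comm]
        refine Finset.sum_congr rfl fun x _ => ?_
        rw [← hc.sum_mul, Finset.sum_smul]
        exact Finset.sum_congr rfl fun q _ => hterm q g x
    _ = _ := by
        rw [Finset.sum_comm]
        conv_rhs => rw [Finset.sum_comm]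
        refine Finset.sum_congr rfl fun x _ => ?_
        refine Fintype.sum_equiv (Equiv.mulRight x) _ _ fun g => ?_
        simp only [Equiv.coe_mulRight, mul_inv_cancel_right]

theorem IsMultiplicativeMatrix.tensor {Y P : Type*} [Fintype P] [DecidableEq P]
    {act' : G → Y → Y} {τ' : G → G → Y → k} {d : P → P → G → k} {ψ : P → Y}
    (hc : IsMultiplicativeMatrix act τ c φ) (hd : IsMultiplicativeMatrix act' τ' d ψ) :
    IsMultiplicativeMatrix (fun gh : G × G => Prod.map (act gh.1) (act' gh.2))
      (fun gh xy f => τ gh.1 xy.1 f.1 * τ' gh.2 xy.2 f.2) (tensorCoeff c d) (Prod.map φ ψ) where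
  sum_mul lp ij gh xy := by
    simp only [tensorCoeff, Fintype.sum_prod_type, Prod.fst_mul, Prod.snd_mul, Prod.map_fst,
      Prod.map_snd]
    calc ∑ q, ∑ r, c lp.1 q gh.1 * d lp.2 r gh.2 * (c q ij.1 xy.1 * d r ij.2 xy.2)
        = (∑ q, c lp.1 q gh.1 * c q ij.1 xy.1) * ∑ r, d lp.2 r gh.2 * d r ij.2 xy.2 := by
          rw [Finset.sum_mul_sum]
          exact Finset.sum_congr rfl fun q _ => Finset.sum_congr rfl fun r _ => by ring
      _ = _ := by rw [hc.sum_mul, hd.sum_mul]; ring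
  eq_act_of_ne_zero qr ij xy h :=
    Prod.ext (hc.eq_act_of_ne_zero _ _ _ (left_ne_zero_of_mul h))
      (hd.eq_act_of_ne_zero _ _ _ (right_ne_zero_of_mul h))
  apply_one lp ij := by
    simp only [tensorCoeff, Prod.fst_one, Prod.snd_one, hc.apply_one, hd.apply_one, Prod.ext_iff]
    split_ifs <;> simp_all

end MultiplicativeMatrix

/-- The entry at `((l, p), (q, r))` is `R(C l q, D p r)`. -/
def braidMatrix {k F G J P : Type*} [CommSemiring k] [Fintype G] (R : G → F → G → F → k)
    (c : J → J → G → k) (φ : J → F) (d : P → P → G → k) (ψ : P → F) :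
    Matrix (J × P) (J × P) k :=
  Matrix.of fun lp qr => ∑ gh : G × G, tensorCoeff c d lp qr gh * R gh.1 (φ qr.1) gh.2 (ψ qr.2)

/-- The entry at `((q, r), (i, j))` is the product `C q i * D r j` in `H`. -/
noncomputable def mulCoeff {k F G J P : Type*} [Field k] [Group F] [Group G] [Fintype G]
    [DecidableEq G] (mp : MatchedPair F G) (cd : CocycleData k F G mp)
    (c : J → J → G → k) (φ : J → F) (d : P → P → G → k) (ψ : P → F) :
    J × P → J × P → (G × F) →₀ k :=
  fun qr ij => ∑ xy : G × G, tensorCoeff c d qr ij xy • mulB mp cd (xy.1, φ ij.1) (xy.2, ψ ij.2)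

section Braiding

variable {k F G : Type*} [Field k] [Group F] [Group G] [Fintype G]
  {J P : Type*} [Fintype J] [DecidableEq J] [Fintype P] [DecidableEq P]
  {mp : MatchedPair F G} {cd : CocycleData k F G mp}
  {c : J → J → G → k} {φ : J → F} {d : P → P → G → k} {ψ : P → F}

/-- `Σ_{q,r} (C l q ⊗ C q i) (D p r ⊗ D r j) = Δ (C l i) Δ (D p j)`, tested against `Ψ` and written
in the shape of the sums in `IsCQT`. -/
theorem IsMultiplicativeMatrix.sum_tensor_smul_comul {V : Type*} [AddCommMonoid V] [Module k V]
    (hc : IsMultiplicativeMatrix mp.rtr (fun g x f => (cd.tau g x f : k)) c φ)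
    (hd : IsMultiplicativeMatrix mp.rtr (fun g x f => (cd.tau g x f : k)) d ψ)
    (lp ij : J × P) (Ψ : G → F → G → F → G → G → V) :
    ∑ qr, ∑ gh : G × G, ∑ xy : G × G,
        (tensorCoeff c d lp qr gh * tensorCoeff c d qr ij xy) •
          Ψ gh.1 (φ qr.1) gh.2 (ψ qr.2) xy.1 xy.2
      = ∑ gh : G × G, tensorCoeff c d lp ij gh • ∑ x, ∑ y,
          (((cd.tau (gh.1 * x⁻¹) x (φ ij.1) : kˣ) : k) * ((cd.tau (gh.2 * y⁻¹) y (ψ ij.2) : kˣ) : k))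
            • Ψ (gh.1 * x⁻¹) (mp.rtr x (φ ij.1)) (gh.2 * y⁻¹) (mp.rtr y (ψ ij.2)) x y := by
  refine ((hc.tensor hd).sum_smul_comul lp ij
    (fun gh f xy => Ψ gh.1 f.1 gh.2 f.2 xy.1 xy.2)).trans ?_
  refine Finset.sum_congr rfl fun gh _ => ?_
  simp only [Fintype.sum_prod_type, Finset.smul_sum, smul_smul, Prod.fst_mul, Prod.snd_mul,
    Prod.fst_inv, Prod.snd_inv, Prod.map_fst, Prod.map_snd, mul_comm]

variable [DecidableEq G] {R : G → F → G → F → k}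

theorem IsCQT.braidMatrix_smul_mulCoeff (hR : IsCQT mp cd R)
    (hc : IsMultiplicativeMatrix mp.rtr (fun g x f => (cd.tau g x f : k)) c φ)
    (hd : IsMultiplicativeMatrix mp.rtr (fun g x f => (cd.tau g x f : k)) d ψ)
    (lp ij : J × P) :
    ∑ qr, braidMatrix R c φ d ψ lp qr • mulCoeff mp cd c φ d ψ qr ij
      = ∑ qr, braidMatrix R c φ d ψ qr ij • mulCoeff mp cd d ψ c φ lp.swap qr.swap := by
  have hleft := hc.sum_tensor_smul_comul hd lp ij
    fun g f h f' x y => R g f h f' • mulB mp cd (x, φ ij.1) (y, ψ ij.2)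
  have hright := hc.sum_tensor_smul_comul hd lp ij
    fun g f h f' x y => R x (φ ij.1) y (ψ ij.2) • mulB mp cd (h, f') (g, f)
  -- both sides contract to `Σ_{g,h} c l i g * d p j h • (one side of IsCQT.qcomm)`
  simp only [smul_smul, hR.qcomm] at hleft hright
  calc ∑ qr, braidMatrix R c φ d ψ lp qr • mulCoeff mp cd c φ d ψ qr ij
      = ∑ qr, ∑ gh : G × G, ∑ xy : G × G,
          (tensorCoeff c d lp qr gh * tensorCoeff c d qr ij xy * R gh.1 (φ qr.1) gh.2 (ψ qr.2))
            • mulB mp cd (xy.1, φ ij.1) (xy.2, ψ ij.2) := by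
        simp only [braidMatrix, mulCoeff, Matrix.of_apply, Finset.sum_smul]
        simp only [Finset.smul_sum, smul_smul, mul_right_comm _ (R _ _ _ _)]
    _ = ∑ qr, ∑ gh : G × G, ∑ xy : G × G,
          (tensorCoeff c d lp qr gh * tensorCoeff c d qr ij xy * R xy.1 (φ ij.1) xy.2 (ψ ij.2))
            • mulB mp cd (gh.2, ψ qr.2) (gh.1, φ qr.1) := hleft.trans hright.symm
    _ = ∑ qr, braidMatrix R c φ d ψ qr ij • mulCoeff mp cd d ψ c φ lp.swap qr.swap := by
        refine Finset.sum_congr rfl fun qr _ => ?_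
        simp only [braidMatrix, mulCoeff, Matrix.of_apply, Finset.smul_sum]
        simp only [smul_smul, Finset.sum_mul, Finset.sum_smul]
        refine Fintype.sum_equiv (Equiv.prodComm G G) _ _ fun gh =>
          Finset.sum_congr rfl fun xy _ => ?_
        simp only [tensorCoeff, Equiv.prodComm_apply, Prod.fst_swap, Prod.snd_swap]
        ring_nf

theorem IsCQT.exists_mul_braidMatrix_eq_one (hR : IsCQT mp cd R)
    (hc : IsMultiplicativeMatrix mp.rtr (fun g x f => (cd.tau g x f : k)) c φ)
    (hd : IsMultiplicativeMatrix mp.rtr (fun g x f => (cd.tau g x f : k)) d ψ) :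
    ∃ B', B' * braidMatrix R c φ d ψ = 1 := by
  obtain ⟨R', -, hR'R⟩ := hR.conv_inv
  refine ⟨braidMatrix R' c φ d ψ, ?_⟩
  ext lp ij
  have h := hc.sum_tensor_smul_comul hd lp ij
    fun g f h f' x y => R' g f h f' * R x (φ ij.1) y (ψ ij.2)
  simp only [smul_eq_mul, ← mul_assoc, hR'R] at h
  calc (braidMatrix R' c φ d ψ * braidMatrix R c φ d ψ) lp ij
      = ∑ qr, ∑ gh : G × G, ∑ xy : G × G,
          tensorCoeff c d lp qr gh * tensorCoeff c d qr ij xy * R' gh.1 (φ qr.1) gh.2 (ψ qr.2)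
            * R xy.1 (φ ij.1) xy.2 (ψ ij.2) := by
        simp only [Matrix.mul_apply, braidMatrix, Matrix.of_apply, Finset.sum_mul_sum]
        refine Finset.sum_congr rfl fun qr _ => Finset.sum_congr rfl fun gh _ =>
          Finset.sum_congr rfl fun xy _ => ?_
        ring
    _ = ∑ gh : G × G, tensorCoeff c d lp ij gh
          * (if gh.1 = 1 then 1 else 0) * (if gh.2 = 1 then 1 else 0) := h
    _ = (1 : Matrix (J × P) (J × P) k) lp ij := by
        rw [Matrix.one_apply, ← (hc.tensor hd).apply_one, Fintype.sum_prod_type]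
        simp [mul_ite, Prod.mk_one_one]

/-- Characters of `H`-comodules commute: `χ_U χ_W = χ_W χ_U`. -/
theorem IsCQT.sum_mulCoeff_comm (hR : IsCQT mp cd R)
    (hc : IsMultiplicativeMatrix mp.rtr (fun g x f => (cd.tau g x f : k)) c φ)
    (hd : IsMultiplicativeMatrix mp.rtr (fun g x f => (cd.tau g x f : k)) d ψ) :
    ∑ ij, mulCoeff mp cd c φ d ψ ij ij = ∑ ji, mulCoeff mp cd d ψ c φ ji ji := by
  obtain ⟨B', hB'⟩ := hR.exists_mul_braidMatrix_eq_one hc hd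
  ext pt
  have key := Matrix.trace_eq_of_mul_eq_mul hB'
    (M := Matrix.of fun qr ij => mulCoeff mp cd c φ d ψ qr ij pt)
    (N := Matrix.of fun lp qr => mulCoeff mp cd d ψ c φ lp.swap qr.swap pt) <| by
      ext lp ij
      simpa [Matrix.mul_apply, Finsupp.finsetSum_apply, mul_comm] using
        congr($(hR.braidMatrix_smul_mulCoeff hc hd lp ij) pt)
  simp only [Matrix.trace, Matrix.diag, Matrix.of_apply] at key
  rw [Finsupp.finsetSum_apply, Finsupp.finsetSum_apply, key]
  exact (Equiv.prodComm J P).sum_comp fun ji => mulCoeff mp cd d ψ c φ ji ji pt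

end Braiding

section Evaluation

variable {k F G : Type*} [Field k] [Group F] [Group G] [DecidableEq G]
  {mp : MatchedPair F G} {cd : CocycleData k F G mp}

theorem mulB_one_right (x y : G) (f : F) :
    mulB mp cd (x, f) (y, 1) = if mp.ltl x f = y then Finsupp.single (x, f) 1 else 0 := by
  simp [mulB, cd.sig_one_right]

theorem mulB_one_left (x y : G) (f : F) :
    mulB mp cd (y, 1) (x, f) = if y = x then Finsupp.single (y, f) 1 else 0 := by
  simp [mulB, mp.ltl_one, cd.sig_one_left]

variable [Fintype G] [DecidableEq F] {J P : Type*} [Fintype J] [Fintype P]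
  {c : J → J → G → k} {φ : J → F} {d : P → P → G → k}

theorem sum_mulCoeff_one_right_apply (g : G) (f : F) :
    (∑ ij, mulCoeff mp cd c φ d (fun _ => 1) ij ij) (g, f)
      = (∑ i, if φ i = f then c i i g else 0) * ∑ j, d j j (mp.ltl g f) := by
  simp +contextual [mulCoeff, tensorCoeff, mulB_one_right, Finsupp.finsetSum_apply,
    Finsupp.single_apply, Fintype.sum_prod_type, Finset.sum_mul_sum, ite_and]

theorem sum_mulCoeff_one_left_apply (g : G) (f : F) :
    (∑ ji, mulCoeff mp cd d (fun _ => 1) c φ ji ji) (g, f)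
      = (∑ i, if φ i = f then c i i g else 0) * ∑ j, d j j g := by
  rw [← (Equiv.prodComm J P).sum_comp]
  simp +contextual [mulCoeff, tensorCoeff, mulB_one_left, Finsupp.finsetSum_apply,
    Finsupp.single_apply, Fintype.sum_prod_type, Finset.sum_mul_sum, ite_and, mul_comm]

end Evaluation

theorem CocycleData.tau_div_mul_tau_div_mul_tau {k F G : Type*} [Field k] [Group F] [Group G]
    {mp : MatchedPair F G} (cd : CocycleData k F G mp)
    {f : F} {t s z g x : G} (hsxz : mp.rtr (s * x * z⁻¹) f = f) :
    (cd.tau g s⁻¹ f : k) / cd.tau t⁻¹ (t * g * s⁻¹) f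
        * ((cd.tau x z⁻¹ f : k) / cd.tau s⁻¹ (s * x * z⁻¹) f)
        * cd.tau (t * g * s⁻¹) (s * x * z⁻¹) f
      = cd.tau g x (mp.rtr z⁻¹ f)
        * ((cd.tau (g * x) z⁻¹ f : k) / cd.tau t⁻¹ (t * (g * x) * z⁻¹) f) := by
  have h1 := congrArg Units.val (cd.tau_cocycle g x z⁻¹ f)
  have h2 := congrArg Units.val (cd.tau_cocycle g s⁻¹ (s * x * z⁻¹) f)
  have h3 := congrArg Units.val (cd.tau_cocycle t⁻¹ (t * g * s⁻¹) (s * x * z⁻¹) f)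
  rw [hsxz, show s⁻¹ * (s * x * z⁻¹) = x * z⁻¹ by group] at h2
  rw [hsxz, show t⁻¹ * (t * g * s⁻¹) = g * s⁻¹ by group,
    show t * g * s⁻¹ * (s * x * z⁻¹) = t * (g * x) * z⁻¹ by group] at h3
  simp only [Units.val_mul] at h1 h2 h3
  have := Units.ne_zero (cd.tau t⁻¹ (t * g * s⁻¹) f)
  have := Units.ne_zero (cd.tau s⁻¹ (s * x * z⁻¹) f)
  have := Units.ne_zero (cd.tau t⁻¹ (t * (g * x) * z⁻¹) f)
  field_simp
  linear_combination (cd.tau x z⁻¹ f * cd.tau t⁻¹ (t * g * s⁻¹) f : k) * h2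
    - (cd.tau s⁻¹ (s * x * z⁻¹) f * cd.tau t⁻¹ (t * g * s⁻¹) f : k) * h1
    - (cd.tau g s⁻¹ f * cd.tau x z⁻¹ f : k) * h3

/-- The multiplicative matrix of the `H`-comodule induced from the `k^{G_f}_{τ_f}`-comodule with
matrices `a`: its entry at `((t, l), (z, i))` is
`Σ_{u ∈ G_f} τ(t⁻¹ u z, z⁻¹; f) / τ(t⁻¹, u; f) · a^u_{l i} · p_{t⁻¹ u z} # (z⁻¹ ▷ f)`. -/
noncomputable def inducedCoeff {k F G ι : Type*} [Field k] [Group F] [Group G] [DecidableEq F]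
    (mp : MatchedPair F G) (cd : CocycleData k F G mp) (f : F)
    (T : Set G) (a : G → Matrix ι ι k) : T × ι → T × ι → G → k :=
  fun tl zi g =>
    if (tl.1 : G) * g * (zi.1 : G)⁻¹ ∈ mp.stabilizer f then
      (cd.tau g (zi.1 : G)⁻¹ f : k) / cd.tau (tl.1 : G)⁻¹ ((tl.1 : G) * g * (zi.1 : G)⁻¹) f
        * a ((tl.1 : G) * g * (zi.1 : G)⁻¹) tl.2 zi.2
    else 0

section InducedComodule

variable {k F G ι : Type*} [Field k] [Group F] [Group G] [DecidableEq F]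
  {mp : MatchedPair F G} {cd : CocycleData k F G mp} {f : F} {T : Set G}
  {a : G → Matrix ι ι k}

theorem inducedCoeff_eq_zero {tl zi : T × ι} {g : G}
    (h : (tl.1 : G) * g * (zi.1 : G)⁻¹ ∉ mp.stabilizer f) :
    inducedCoeff mp cd f T a tl zi g = 0 :=
  if_neg h

/-- Only the representative `s ∈ T` of `G_f z x⁻¹` contributes to the sum; the scalars then match
by `CocycleData.tau_div_mul_tau_div_mul_tau`. -/
theorem sum_inducedCoeff_mul_inducedCoeff [Fintype T] [Fintype ι]
    (hT : ∀ x : G, ∃! z, z ∈ T ∧ x * z⁻¹ ∈ mp.stabilizer f)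
    (ha : ∀ u w, u ∈ mp.stabilizer f → w ∈ mp.stabilizer f →
      a u * a w = (cd.tau u w f : k) • a (u * w))
    (tl zi : T × ι) (g x : G) :
    ∑ sq, inducedCoeff mp cd f T a tl sq g * inducedCoeff mp cd f T a sq zi x
      = cd.tau g x (mp.rtr (zi.1 : G)⁻¹ f) * inducedCoeff mp cd f T a tl zi (g * x) := by
  obtain ⟨⟨t, ht⟩, l⟩ := tl
  obtain ⟨⟨z, hz⟩, i⟩ := zi
  obtain ⟨s, ⟨hs, hzxs⟩, -⟩ := hT (z * x⁻¹)
  have hsxz : s * x * z⁻¹ ∈ mp.stabilizer f := by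
    simpa [mul_assoc] using (mp.stabilizer f).inv_mem hzxs
  rw [Fintype.sum_prod_type, Finset.sum_eq_single ⟨s, hs⟩]
  · dsimp only
    by_cases htgxz : t * (g * x) * z⁻¹ ∈ mp.stabilizer f
    · have htgs : t * g * s⁻¹ ∈ mp.stabilizer f := by
        simpa [mul_assoc] using (mp.stabilizer f).mul_mem htgxz ((mp.stabilizer f).inv_mem hsxz)
      simp only [inducedCoeff, if_pos htgs, if_pos hsxz, if_pos htgxz]
      calc ∑ q, (cd.tau g s⁻¹ f : k) / cd.tau t⁻¹ (t * g * s⁻¹) f * a (t * g * s⁻¹) l q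
            * ((cd.tau x z⁻¹ f : k) / cd.tau s⁻¹ (s * x * z⁻¹) f * a (s * x * z⁻¹) q i)
          = (cd.tau g s⁻¹ f : k) / cd.tau t⁻¹ (t * g * s⁻¹) f
              * ((cd.tau x z⁻¹ f : k) / cd.tau s⁻¹ (s * x * z⁻¹) f)
              * (a (t * g * s⁻¹) * a (s * x * z⁻¹)) l i := by
            rw [Matrix.mul_apply, Finset.mul_sum]
            exact Finset.sum_congr rfl fun q _ => by ring
        _ = _ := by
            rw [ha _ _ htgs hsxz, Matrix.smul_apply, smul_eq_mul, ← mul_assoc,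
              cd.tau_div_mul_tau_div_mul_tau hsxz,
              show t * g * s⁻¹ * (s * x * z⁻¹) = t * (g * x) * z⁻¹ by group]
            ring
    · rw [inducedCoeff_eq_zero htgxz, mul_zero]
      refine Finset.sum_eq_zero fun q _ => mul_eq_zero_of_left (inducedCoeff_eq_zero ?_) _
      intro htgs
      apply htgxz
      simpa [mul_assoc] using (mp.stabilizer f).mul_mem htgs hsxz
  · rintro ⟨s', hs'⟩ - hne
    refine Finset.sum_eq_zero fun q _ => mul_eq_zero_of_right _ (inducedCoeff_eq_zero ?_)
    intro hs'xz
    apply hne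
    ext
    refine (hT (z * x⁻¹)).unique ⟨hs', ?_⟩ ⟨hs, hzxs⟩
    simpa [mul_assoc] using (mp.stabilizer f).inv_mem hs'xz
  · simp

theorem isMultiplicativeMatrix_inducedCoeff [DecidableEq G] [Fintype T] [Fintype ι] [DecidableEq ι]
    (hT : ∀ x : G, ∃! z, z ∈ T ∧ x * z⁻¹ ∈ mp.stabilizer f) (ha1 : a 1 = 1)
    (ha : ∀ u w, u ∈ mp.stabilizer f → w ∈ mp.stabilizer f →
      a u * a w = (cd.tau u w f : k) • a (u * w)) :
    IsMultiplicativeMatrix mp.rtr (fun g x f => (cd.tau g x f : k)) (inducedCoeff mp cd f T a)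
      (fun zi => mp.rtr (zi.1 : G)⁻¹ f) where
  sum_mul := sum_inducedCoeff_mul_inducedCoeff hT ha
  eq_act_of_ne_zero := by
    rintro ⟨⟨s, hs⟩, q⟩ ⟨⟨z, hz⟩, i⟩ x h
    have hsxz : s * x * z⁻¹ ∈ mp.stabilizer f := by
      by_contra hn
      exact h (inducedCoeff_eq_zero hn)
    dsimp only
    rw [← mp.mul_rtr, show x * z⁻¹ = s⁻¹ * (s * x * z⁻¹) by group, mp.mul_rtr, hsxz]
  apply_one := by
    rintro ⟨⟨t, ht⟩, l⟩ ⟨⟨z, hz⟩, i⟩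
    by_cases htz : t = z
    · subst htz
      simp [inducedCoeff, cd.one_tau, cd.tau_one, ha1, Matrix.one_apply]
    · rw [inducedCoeff_eq_zero, if_neg (by simp [htz])]
      intro h
      exact htz (eq_of_mul_inv_mem_of_existsUnique hT ht hz (by simpa using h))

theorem sum_inducedCoeff_diag_eq [Fintype T] [Fintype ι]
    (hT : ∀ x : G, ∃! z, z ∈ T ∧ x * z⁻¹ ∈ mp.stabilizer f) {g z : G}
    (hg : g ∈ mp.stabilizer f) (hz : z ∈ T) :
    ∑ zi : T × ι, (if mp.rtr (zi.1 : G)⁻¹ f = mp.rtr z⁻¹ f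
        then inducedCoeff mp cd f T a zi zi (z⁻¹ * g * z) else 0)
      = (cd.tau (z⁻¹ * g * z) z⁻¹ f : k) / cd.tau z⁻¹ g f * (a g).trace := by
  rw [Fintype.sum_prod_type, Finset.sum_eq_single ⟨z, hz⟩]
  · have hzgz : z * (z⁻¹ * g * z) * z⁻¹ = g := by group
    simp only [inducedCoeff, hzgz, if_pos hg, ite_true, Matrix.trace, Matrix.diag, Finset.mul_sum]
  · rintro ⟨s, hs⟩ - hne
    refine Finset.sum_eq_zero fun i _ => if_neg fun h => hne ?_
    ext
    exact (eq_of_mul_inv_mem_of_existsUnique hT hz hs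
      (MatchedPair.mul_inv_mem_stabilizer_of_rtr_inv_eq h)).symm
  · simp

end InducedComodule

theorem isMultiplicativeMatrix_of_map_mul {k F G ι : Type*} [Field k] [Group F] [Group G]
    [Fintype ι] [DecidableEq ι] (mp : MatchedPair F G) (cd : CocycleData k F G mp)
    {b : G → Matrix ι ι k} (hb1 : b 1 = 1) (hb : ∀ u w, b u * b w = b (u * w)) :
    IsMultiplicativeMatrix mp.rtr (fun g x f => (cd.tau g x f : k)) (fun p j h => b h p j)
      (fun _ => 1) where
  sum_mul p j h y := by
    rw [← Matrix.mul_apply, hb, cd.tau_one_right, Units.val_one, one_mul]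
  eq_act_of_ne_zero _ _ x _ := (mp.rtr_one_s6 x).symm
  apply_one p j := by rw [hb1, Matrix.one_apply]

theorem trace_ltl_eq_of_cqt_general {k F G : Type*} [Field k]
    [Group F] [Group G] [Fintype G] [DecidableEq G]
    (mp : MatchedPair F G) (cd : CocycleData k F G mp)
    (hR : ∃ R : G → F → G → F → k, IsCQT mp cd R)
    (f : F) (T : Set G)
    (hT : ∀ x : G, ∃! z : G, z ∈ T ∧ mp.rtr (x * z⁻¹) f = f)
    (m n : ℕ)
    (a : G → Matrix (Fin m) (Fin m) k) (b : G → Matrix (Fin n) (Fin n) k)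
    (ha1 : a 1 = 1)
    (hacoassoc : ∀ u w : G, mp.rtr u f = f → mp.rtr w f = f →
      a u * a w = ((cd.tau u w f : kˣ) : k) • a (u * w))
    (hb1 : b 1 = 1)
    (hbcoassoc : ∀ u w : G, b u * b w = b (u * w)) :
    ∀ g : G, mp.rtr g f = f → ∀ z ∈ T,
      (∑ i : Fin m, ∑ j : Fin n,
          a g i i * b (mp.ltl (z⁻¹ * g * z) (mp.rtr z⁻¹ f)) j j)
        = ∑ i : Fin m, ∑ j : Fin n, a g i i * b (z⁻¹ * g * z) j j := by
  classical
  intro g hg z hz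
  obtain ⟨R, hR⟩ := hR
  have hχ := congr($(hR.sum_mulCoeff_comm (isMultiplicativeMatrix_inducedCoeff hT ha1 hacoassoc)
    (isMultiplicativeMatrix_of_map_mul mp cd hb1 hbcoassoc)) (z⁻¹ * g * z, mp.rtr z⁻¹ f))
  rw [sum_mulCoeff_one_right_apply, sum_mulCoeff_one_left_apply,
    sum_inducedCoeff_diag_eq hT hg hz] at hχ
  have hμ : (cd.tau (z⁻¹ * g * z) z⁻¹ f : k) / cd.tau z⁻¹ g f ≠ 0 :=
    div_ne_zero (Units.ne_zero _) (Units.ne_zero _)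
  rw [← Finset.sum_mul_sum, ← Finset.sum_mul_sum]
  exact mul_left_cancel₀ hμ (by simpa only [mul_assoc, Matrix.trace, Matrix.diag] using hχ)

/-- Let `H = k^G τ#_σ kF` admit a coquasitriangular structure, fix `f ∈ F`, and let
`T` be a complete set of representatives of the right cosets of the stabilizer
`G_f = {x : x ▷ f = f}` in `G` with `1 ∈ T`. Let `V` (dimension `m`) be a simple right
comodule over the coalgebra `k^{G_f}_{τ_f}` with coaction matrices
`(a u) l i = a^u_{li}` for `u ∈ G_f` (comodule axioms: `a 1 = 1` and
`a u * a w = τ(u, w; f) • a (u w)`; simplicity: the only subspaces invariant under all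
`a u`, `u ∈ G_f`, are `⊥` and `⊤`), and let `W` (dimension `n`) be a simple right
comodule over `k^G` with coaction matrices `b h`. Then for every `g ∈ G_f` and
`z ∈ T`:
`Σ_i Σ_j a^g_{ii} b^{(z⁻¹gz) ◁ (z⁻¹ ▷ f)}_{jj} = Σ_i Σ_j a^g_{ii} b^{z⁻¹gz}_{jj}`. -/
theorem trace_ltl_eq_of_cqt {k F G : Type*} [Field k] [IsAlgClosed k] [CharZero k]
    [Group F] [Group G] [Fintype G] [DecidableEq G]
    (mp : MatchedPair F G) (cd : CocycleData k F G mp)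
    (hR : ∃ R : G → F → G → F → k, IsCQT mp cd R)
    (f : F) (T : Set G) (hT1 : (1 : G) ∈ T)
    (hT : ∀ x : G, ∃! z : G, z ∈ T ∧ mp.rtr (x * z⁻¹) f = f)
    (m n : ℕ) (hm : 0 < m) (hn : 0 < n)
    (a : G → Matrix (Fin m) (Fin m) k) (b : G → Matrix (Fin n) (Fin n) k)
    (ha1 : a 1 = 1)
    (hacoassoc : ∀ u w : G, mp.rtr u f = f → mp.rtr w f = f →
      a u * a w = ((cd.tau u w f : kˣ) : k) • a (u * w))
    (hasimple : ∀ U : Submodule k (Fin m → k),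
      (∀ v ∈ U, ∀ u : G, mp.rtr u f = f → (a u).mulVec v ∈ U) → U = ⊥ ∨ U = ⊤)
    (hb1 : b 1 = 1)
    (hbcoassoc : ∀ u w : G, b u * b w = b (u * w))
    (hbsimple : ∀ U : Submodule k (Fin n → k),
      (∀ v ∈ U, ∀ u : G, (b u).mulVec v ∈ U) → U = ⊥ ∨ U = ⊤) :
    ∀ g : G, mp.rtr g f = f → ∀ z ∈ T,
      (∑ i : Fin m, ∑ j : Fin n,
          a g i i * b (mp.ltl (z⁻¹ * g * z) (mp.rtr z⁻¹ f)) j j)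
        = ∑ i : Fin m, ∑ j : Fin n, a g i i * b (z⁻¹ * g * z) j j :=
  trace_ltl_eq_of_cqt_general mp cd hR f T hT m n a b ha1 hacoassoc hb1 hbcoassoc
end

section
/- Let G be a finite group, F a group, (F, G, ◁, ▷) a matched pair with u ▷ v = v for all u ∈ G, v ∈ F (so G_v = G for every v ∈ F), and σ, τ cocycle data. Suppose the Hopf algebra H = k^G τ#_σ kF admits a coquasitriangular structure. Fix f, f' ∈ F. Let V with basis {v^(1), …, v^(m)} be a simple right comodule over the coalgebra k^G_{τ_f}, with coaction ρ(v^(i)) = Σ_{l=1}^m v^(l) ⊗ (Σ_{g∈G} a^g_{li} p_g), and let W with basis {w^(1), …, w^(n)} be a simple right comodule over the coalgebra k^G_{τ_{f'}}, with coaction ρ(w^(j)) = Σ_{k=1}^n w^(k) ⊗ (Σ_{h∈G} b^h_{kj} p_h). Then for every g ∈ G: Σ_{i=1}^m Σ_{j=1}^n a^g_{ii} b^{g◁f}_{jj} σ(g; f, f') = Σ_{i=1}^m Σ_{j=1}^n a^{g◁f'}_{ii} b^g_{jj} σ(g; f', f). -/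
/-! The braiding `v ⊗ w ↦ Σ w₀ ⊗ v₀ R(v₁, w₁)` of `V ⊗ W`, composed with the flip, is a matrix `K`
on `V ⊗ W`, invertible because `R` is convolution invertible. The `p_z # ff'`-coefficient of the
coaction of `V ⊗ W` is `C z = σ(z; f, f') a_z ⊗ b_{z◁f}`, and quasi-commutativity evaluated at
`p_z # ff'` says `K C z = C' z K` with `C' z = σ(z; f', f) a_{z◁f'} ⊗ b_z` if `f'f = ff'`, and
`K C z = 0` otherwise; as `C 1 = 1`, the latter forces `K = 0`, so `K C z = C' z K` always holds.
Hence `C g` and `C' g` are conjugate and have the same trace, and `tr (A ⊗ B) = tr A · tr B`. -/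

open Matrix
open scoped Kronecker

namespace Matrix

theorem trace_eq_of_mul_eq_mul_of_mul_eq_one {k ι : Type*} [CommRing k] [Fintype ι]
    [DecidableEq ι] {A B X Y : Matrix ι ι k} (hAB : A * B = 1) (h : A * X = Y * A) :
    trace X = trace Y :=
  calc trace X = trace (B * (Y * A)) := by
        rw [← h, ← Matrix.mul_assoc, mul_eq_one_comm.mp hAB, Matrix.one_mul]
    _ = trace (Y * A * B) := trace_mul_comm _ _
    _ = trace Y := by rw [Matrix.mul_assoc, hAB, Matrix.mul_one]

theorem kronecker_mul_kronecker_of_mul_eq_smul {k G H ι κ : Type*} [CommSemiring k] [Group G]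
    [Group H] [Fintype ι] [Fintype κ] {α : G → G → k} {β : H → H → k}
    {a : G → Matrix ι ι k} {b : H → Matrix κ κ k}
    (ha : ∀ u w, a u * a w = α u w • a (u * w)) (hb : ∀ u w, b u * b w = β u w • b (u * w))
    (p q : G × H) :
    (a p.1 ⊗ₖ b p.2) * (a q.1 ⊗ₖ b q.2)
      = (α p.1 q.1 * β p.2 q.2) • (a (p * q).1 ⊗ₖ b (p * q).2) := by
  rw [← mul_kronecker_mul, ha, hb, smul_kronecker, kronecker_smul, smul_smul]
  rfl

section ProjectiveRepresentation

variable {k G ι : Type*} [CommSemiring k] [Group G] [Fintype G] [Fintype ι] [DecidableEq ι]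
  {α : G → G → k} {ρ : G → Matrix ι ι k}

theorem sum_smul_mul_of_mul_eq_smul (hρ : ∀ u w, ρ u * ρ w = α u w • ρ (u * w))
    (c : G → k) (z : G) :
    (∑ p, c p • ρ p) * ρ z = ∑ p, (α (p * z⁻¹) z * c (p * z⁻¹)) • ρ p := by
  simp only [Finset.sum_mul, smul_mul_assoc, hρ, smul_smul]
  exact Fintype.sum_equiv (Equiv.mulRight z) _ _ fun u => by simp [mul_comm]

theorem mul_sum_smul_of_mul_eq_smul (hρ : ∀ u w, ρ u * ρ w = α u w • ρ (u * w))
    (c : G → k) (z : G) :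
    ρ z * (∑ p, c p • ρ p) = ∑ p, (α z (z⁻¹ * p) * c (z⁻¹ * p)) • ρ p := by
  simp only [Finset.mul_sum, mul_smul_comm, hρ, smul_smul]
  exact Fintype.sum_equiv (Equiv.mulLeft z) _ _ fun u => by simp [mul_comm]

theorem sum_smul_mul_sum_smul_of_mul_eq_smul (hρ : ∀ u w, ρ u * ρ w = α u w • ρ (u * w))
    (c d : G → k) :
    (∑ p, c p • ρ p) * (∑ q, d q • ρ q)
      = ∑ p, (∑ q, α (p * q⁻¹) q * c (p * q⁻¹) * d q) • ρ p := by
  simp only [Finset.mul_sum, mul_smul_comm, sum_smul_mul_of_mul_eq_smul hρ, Finset.smul_sum,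
    smul_smul, Finset.sum_smul]
  rw [Finset.sum_comm]
  exact Finset.sum_congr rfl fun p _ => Finset.sum_congr rfl fun q _ => by ring_nf

theorem sum_smul_mul_sum_smul_eq_one [DecidableEq G] (hρ : ∀ u w, ρ u * ρ w = α u w • ρ (u * w))
    (hρ1 : ρ 1 = 1) {c d : G → k}
    (hcd : ∀ p, ∑ q, α (p * q⁻¹) q * c (p * q⁻¹) * d q = if p = 1 then 1 else 0) :
    (∑ p, c p • ρ p) * (∑ q, d q • ρ q) = 1 := by
  simp only [sum_smul_mul_sum_smul_of_mul_eq_smul hρ, hcd, ite_smul, one_smul, zero_smul,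
    Finset.sum_ite_eq', Finset.mem_univ, if_true, hρ1]

end ProjectiveRepresentation

theorem trace_smul_kronecker {k ι κ : Type*} [CommSemiring k] [Fintype ι] [Fintype κ]
    (c : k) (A : Matrix ι ι k) (B : Matrix κ κ k) :
    trace (c • (A ⊗ₖ B)) = ∑ i, ∑ j, A i i * B j j * c := by
  rw [trace_smul, trace_kronecker, trace, trace, Finset.sum_mul_sum, smul_eq_mul, mul_comm,
    Finset.sum_mul]
  simp only [diag_apply, Finset.sum_mul]

end Matrix

theorem MatchedPair.one_ltl {F G : Type*} [Group F] [Group G] (mp : MatchedPair F G) (f : F) :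
    mp.ltl 1 f = 1 := by
  have h := mp.mul_ltl 1 1 f
  rwa [one_mul, mp.one_rtr, left_eq_mul] at h

/-- The braiding `v ⊗ w ↦ Σ w₀ ⊗ v₀ R(v₁ # f, w₁ # f')` followed by the flip `W ⊗ V → V ⊗ W`,
in the basis `v^(i) ⊗ w^(j)` of `V ⊗ W`. -/
def braidingMatrix {k F G ι κ : Type*} [CommSemiring k] [Fintype G] (R : G → F → G → F → k)
    (f f' : F) (a : G → Matrix ι ι k) (b : G → Matrix κ κ k) : Matrix (ι × κ) (ι × κ) k :=
  ∑ p : G × G, R p.1 f p.2 f' • (a p.1 ⊗ₖ b p.2)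

section

variable {k F G : Type*} [Field k] [Group F] [Group G] [DecidableEq G] [Fintype G]
  {mp : MatchedPair F G} {cd : CocycleData k F G mp}

theorem sum_sum_smul_mulB_apply [DecidableEq F] (e : G → G → k) (f₁ f₂ f₀ : F) (z : G) :
    (∑ u, ∑ v, e u v • mulB mp cd (u, f₁) (v, f₂)) (z, f₀)
      = if f₁ * f₂ = f₀ then e z (mp.ltl z f₁) * cd.sig z f₁ f₂ else 0 := by
  simp only [mulB, apply_ite, Finsupp.smul_single, smul_eq_mul, Finsupp.single_mul, smul_zero,
    Finset.sum_ite_eq, Finset.mem_univ, ↓reduceIte, Finsupp.finsetSum_apply, Finsupp.mul_apply,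
    Finsupp.single_apply, Prod.mk.injEq, ite_mul, zero_mul, mul_zero]
  split_ifs with h <;> simp [h]

theorem sum_sum_smul_mulB_swap_apply [DecidableEq F] (e : G → G → k) (g h : G) (f₁ f₂ f₀ : F)
    (z : G) :
    (∑ x, ∑ y, e x y • mulB mp cd (h * y⁻¹, f₂) (g * x⁻¹, f₁)) (z, f₀)
      = if f₂ * f₁ = f₀ then e ((mp.ltl z f₂)⁻¹ * g) (z⁻¹ * h) * cd.sig z f₂ f₁ else 0 := by
  have hre : ∑ x, ∑ y, e x y • mulB mp cd (h * y⁻¹, f₂) (g * x⁻¹, f₁)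
      = ∑ v, ∑ u, e (u⁻¹ * g) (v⁻¹ * h) • mulB mp cd (v, f₂) (u, f₁) := by
    rw [Finset.sum_comm]
    exact Fintype.sum_equiv (Equiv.divLeft h) _ _ fun y =>
      Fintype.sum_equiv (Equiv.divLeft g) _ _ fun x => by simp [div_eq_mul_inv]
  rw [hre, sum_sum_smul_mulB_apply]

namespace IsCQT

variable {R : G → F → G → F → k}

theorem exists_conv_inv (hR : IsCQT mp cd R) (hrtr : ∀ u v, mp.rtr u v = v) (f f' : F) :
    ∃ R' : G → F → G → F → k, ∀ p : G × G,
      ∑ q : G × G, (cd.tau (p * q⁻¹).1 q.1 f * cd.tau (p * q⁻¹).2 q.2 f' : k)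
          * R (p * q⁻¹).1 f (p * q⁻¹).2 f' * R' q.1 f q.2 f' = if p = 1 then 1 else 0 := by
  obtain ⟨R', hR', -⟩ := hR.conv_inv
  refine ⟨R', fun ⟨g, h⟩ => ?_⟩
  have := hR' g h f f'
  simp only [hrtr] at this
  rw [ite_zero_mul_ite_zero, one_mul] at this
  rw [Fintype.sum_prod_type]
  simpa only [Prod.mk_eq_one, Prod.fst_mul, Prod.snd_mul, Prod.fst_inv, Prod.snd_inv] using this

/-- Quasi-commutativity evaluated at the basis vector `p_z # ff'`. -/
theorem qcomm_coeff [DecidableEq F] (hR : IsCQT mp cd R) (hrtr : ∀ u v, mp.rtr u v = v)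
    (f f' : F) (g h z : G) :
    (cd.tau (g * z⁻¹) z f * cd.tau (h * (mp.ltl z f)⁻¹) (mp.ltl z f) f' : k)
        * R (g * z⁻¹) f (h * (mp.ltl z f)⁻¹) f' * cd.sig z f f'
      = if f' * f = f * f' then
          (cd.tau (mp.ltl z f') ((mp.ltl z f')⁻¹ * g) f * cd.tau z (z⁻¹ * h) f' : k)
            * R ((mp.ltl z f')⁻¹ * g) f (z⁻¹ * h) f' * cd.sig z f' f
        else 0 := by
  have hq := DFunLike.congr_fun (hR.qcomm g h f f') (z, f * f')
  simp only [hrtr] at hq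
  rw [sum_sum_smul_mulB_apply, if_pos rfl, sum_sum_smul_mulB_swap_apply] at hq
  simpa only [_root_.mul_inv_rev, inv_inv, mul_inv_cancel_left] using hq

theorem braidingMatrix_mul_kronecker [DecidableEq F] (hR : IsCQT mp cd R)
    (hrtr : ∀ u v, mp.rtr u v = v) {ι κ : Type*} [Fintype ι] [DecidableEq ι] [Fintype κ]
    [DecidableEq κ] {f f' : F} {a : G → Matrix ι ι k} {b : G → Matrix κ κ k}
    (ha : ∀ u w, a u * a w = (cd.tau u w f : k) • a (u * w))
    (hb : ∀ u w, b u * b w = (cd.tau u w f' : k) • b (u * w)) (z : G) :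
    braidingMatrix R f f' a b * ((cd.sig z f f' : k) • (a z ⊗ₖ b (mp.ltl z f)))
      = if f' * f = f * f' then
          ((cd.sig z f' f : k) • (a (mp.ltl z f') ⊗ₖ b z)) * braidingMatrix R f f' a b
        else 0 := by
  have hρ := kronecker_mul_kronecker_of_mul_eq_smul ha hb
  have hright := sum_smul_mul_of_mul_eq_smul hρ (fun p => R p.1 f p.2 f') (z, mp.ltl z f)
  have hleft := mul_sum_smul_of_mul_eq_smul hρ (fun p => R p.1 f p.2 f') (mp.ltl z f', z)
  rw [mul_smul_comm, smul_mul_assoc, braidingMatrix, hright, hleft]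
  simp only [Finset.smul_sum, smul_smul]
  split_ifs with hff'
  · refine Finset.sum_congr rfl fun p _ => ?_
    have := hR.qcomm_coeff hrtr f f' p.1 p.2 z
    rw [if_pos hff'] at this
    exact congrArg (· • _) ((mul_comm _ _).trans (this.trans (mul_comm _ _)))
  · refine Finset.sum_eq_zero fun p _ => ?_
    have := hR.qcomm_coeff hrtr f f' p.1 p.2 z
    rw [if_neg hff'] at this
    exact (congrArg (· • _) ((mul_comm _ _).trans this)).trans (zero_smul _ _)

end IsCQT

end

theorem trace_sigma_eq_of_cqt_trivial_rtr_general {k F G : Type*} [Field k]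
    [Group F] [Group G] [Fintype G] [DecidableEq G]
    (mp : MatchedPair F G) (cd : CocycleData k F G mp)
    (hrtr : ∀ (u : G) (v : F), mp.rtr u v = v)
    (hR : ∃ R : G → F → G → F → k, IsCQT mp cd R)
    (f f' : F) (m n : ℕ)
    (a : G → Matrix (Fin m) (Fin m) k) (b : G → Matrix (Fin n) (Fin n) k)
    (ha1 : a 1 = 1)
    (hacoassoc : ∀ u w : G, a u * a w = ((cd.tau u w f : kˣ) : k) • a (u * w))
    (hb1 : b 1 = 1)
    (hbcoassoc : ∀ u w : G, b u * b w = ((cd.tau u w f' : kˣ) : k) • b (u * w)) :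
    ∀ g : G,
      (∑ i : Fin m, ∑ j : Fin n,
          a g i i * b (mp.ltl g f) j j * ((cd.sig g f f' : kˣ) : k))
        = ∑ i : Fin m, ∑ j : Fin n,
            a (mp.ltl g f') i i * b g j j * ((cd.sig g f' f : kˣ) : k) := by
  classical
  obtain ⟨R, hR⟩ := hR
  obtain ⟨R', hR'⟩ := hR.exists_conv_inv hrtr f f'
  have hKK' : braidingMatrix R f f' a b * braidingMatrix R' f f' a b = 1 := by
    refine sum_smul_mul_sum_smul_eq_one
      (kronecker_mul_kronecker_of_mul_eq_smul hacoassoc hbcoassoc) ?_ hR'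
    rw [Prod.fst_one, Prod.snd_one, ha1, hb1, one_kronecker_one]
  set K := braidingMatrix R f f' a b
  have hKC := hR.braidingMatrix_mul_kronecker hrtr hacoassoc hbcoassoc
  have hintertwine : ∀ z, K * ((cd.sig z f f' : k) • (a z ⊗ₖ b (mp.ltl z f)))
      = ((cd.sig z f' f : k) • (a (mp.ltl z f') ⊗ₖ b z)) * K := by
    by_cases hff' : f' * f = f * f'
    · simpa only [if_pos hff'] using hKC
    · have hK : K = 0 := by
        simpa [if_neg hff', cd.one_sig, mp.one_ltl, ha1, hb1] using hKC 1
      simp [hK]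
  intro g
  have htrace := trace_eq_of_mul_eq_mul_of_mul_eq_one hKK' (hintertwine g)
  rwa [trace_smul_kronecker, trace_smul_kronecker] at htrace

/-- Suppose `u ▷ v = v` for all `u ∈ G`, `v ∈ F` (so `G_v = G`), and
`H = k^G τ#_σ kF` admits a coquasitriangular structure. Fix `f, f' ∈ F`. Let `V`
(dimension `m`) be a simple right comodule over the coalgebra `k^G_{τ_f}`, with
coaction matrices `a u` (comodule axioms: `a 1 = 1`, `a u * a w = τ(u,w;f) • a (uw)`),
and `W` (dimension `n`) a simple right comodule over `k^G_{τ_{f'}}` with matrices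
`b h`. Then for every `g ∈ G`:
`Σ_i Σ_j a^g_{ii} b^{g◁f}_{jj} σ(g;f,f') = Σ_i Σ_j a^{g◁f'}_{ii} b^g_{jj} σ(g;f',f)`. -/
theorem trace_sigma_eq_of_cqt_trivial_rtr {k F G : Type*} [Field k] [IsAlgClosed k]
    [CharZero k] [Group F] [Group G] [Fintype G] [DecidableEq G]
    (mp : MatchedPair F G) (cd : CocycleData k F G mp)
    (hrtr : ∀ (u : G) (v : F), mp.rtr u v = v)
    (hR : ∃ R : G → F → G → F → k, IsCQT mp cd R)
    (f f' : F) (m n : ℕ) (hm : 0 < m) (hn : 0 < n)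
    (a : G → Matrix (Fin m) (Fin m) k) (b : G → Matrix (Fin n) (Fin n) k)
    (ha1 : a 1 = 1)
    (hacoassoc : ∀ u w : G, a u * a w = ((cd.tau u w f : kˣ) : k) • a (u * w))
    (hasimple : ∀ U : Submodule k (Fin m → k),
      (∀ v ∈ U, ∀ u : G, (a u).mulVec v ∈ U) → U = ⊥ ∨ U = ⊤)
    (hb1 : b 1 = 1)
    (hbcoassoc : ∀ u w : G, b u * b w = ((cd.tau u w f' : kˣ) : k) • b (u * w))
    (hbsimple : ∀ U : Submodule k (Fin n → k),
      (∀ v ∈ U, ∀ u : G, (b u).mulVec v ∈ U) → U = ⊥ ∨ U = ⊤) :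
    ∀ g : G,
      (∑ i : Fin m, ∑ j : Fin n,
          a g i i * b (mp.ltl g f) j j * ((cd.sig g f f' : kˣ) : k))
        = ∑ i : Fin m, ∑ j : Fin n,
            a (mp.ltl g f') i i * b g j j * ((cd.sig g f' f : kˣ) : k) :=
  trace_sigma_eq_of_cqt_trivial_rtr_general mp cd hrtr hR f f' m n a b ha1 hacoassoc hb1 hbcoassoc
end
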